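/- arXiv:1807.09497 — 2 statements merged into one kernel-verified Lean document; each statement's English description precedes it below -/
import Mathlib

section
/- For every p ≥ 2 and all real numbers a and b with b ≥ 0, one has (a+b)^{p-1} - sign(a)|a|^{p-1} ≥ 2^{2-p} b^{p-1}, where t^{p-1} denotes |t|^{p-2} t for real t. -/
/-!
With `q = p - 1 ≥ 1`, the paper's `t^{q}` is `oddRpow q t = |t| ^ (q - 1) * t`. When `a` and
`a + b` have the same sign, superadditivity of `s ↦ s ^ q` on `[0, ∞)` gives the sharper bound
`b ^ q`. When `a < 0 < a + b`, the difference is `(a + b) ^ q + |a| ^ q`, and convexity of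
`s ↦ s ^ q` bounds this from below by `2 ^ (1 - q) * (a + b + |a|) ^ q = 2 ^ (1 - q) * b ^ q`.
-/

open Real

noncomputable def oddRpow (q t : ℝ) : ℝ := |t| ^ (q - 1) * t

variable {q : ℝ}

lemma oddRpow_neg (q t : ℝ) : oddRpow q (-t) = -oddRpow q t := by
  simp only [oddRpow, abs_neg, mul_neg]

lemma oddRpow_of_nonneg (hq : q ≠ 0) {t : ℝ} (ht : 0 ≤ t) : oddRpow q t = t ^ q := by
  rw [oddRpow, abs_of_nonneg ht]
  conv_rhs => rw [← sub_add_cancel q 1, rpow_add' ht (by simpa using hq), rpow_one]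

lemma oddRpow_of_nonpos (hq : q ≠ 0) {t : ℝ} (ht : t ≤ 0) : oddRpow q t = -(-t) ^ q := by
  rw [← oddRpow_of_nonneg hq (neg_nonneg.2 ht), oddRpow_neg, neg_neg]

lemma Real.rpow_add_le_mul_rpow_add_rpow {x y : ℝ} (hx : 0 ≤ x) (hy : 0 ≤ y) (hq : 1 ≤ q) :
    (x + y) ^ q ≤ 2 ^ (q - 1) * (x ^ q + y ^ q) := by
  lift x to NNReal using hx
  lift y to NNReal using hy
  exact_mod_cast NNReal.rpow_add_le_mul_rpow_add_rpow x y hq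

lemma rpow_sub_le_oddRpow_sub_of_nonneg (hq : 1 ≤ q) {x y : ℝ} (hx : 0 ≤ x) (hxy : x ≤ y) :
    (y - x) ^ q ≤ oddRpow q y - oddRpow q x := by
  have hq₀ : q ≠ 0 := by positivity
  have := add_rpow_le_rpow_add hx (sub_nonneg.2 hxy) hq
  rw [add_sub_cancel] at this
  rw [oddRpow_of_nonneg hq₀ (hx.trans hxy), oddRpow_of_nonneg hq₀ hx]
  linarith

lemma rpow_sub_le_oddRpow_sub_of_nonpos (hq : 1 ≤ q) {x y : ℝ} (hy : y ≤ 0) (hxy : x ≤ y) :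
    (y - x) ^ q ≤ oddRpow q y - oddRpow q x := by
  have := rpow_sub_le_oddRpow_sub_of_nonneg hq (neg_nonneg.2 hy) (neg_le_neg hxy)
  rwa [oddRpow_neg, oddRpow_neg, neg_sub_neg, neg_sub_neg] at this

lemma two_rpow_one_sub_mul_rpow_sub_le_oddRpow_sub_of_nonpos_of_nonneg (hq : 1 ≤ q) {x y : ℝ}
    (hx : x ≤ 0) (hy : 0 ≤ y) :
    2 ^ (1 - q) * (y - x) ^ q ≤ oddRpow q y - oddRpow q x := by
  have hq₀ : q ≠ 0 := by positivity
  have hconv := rpow_add_le_mul_rpow_add_rpow hy (neg_nonneg.2 hx) hq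
  have hcancel : (2 : ℝ) ^ (1 - q) * 2 ^ (q - 1) = 1 := by
    rw [← rpow_add two_pos, show 1 - q + (q - 1) = 0 by ring, rpow_zero]
  calc 2 ^ (1 - q) * (y - x) ^ q
      ≤ 2 ^ (1 - q) * (2 ^ (q - 1) * (y ^ q + (-x) ^ q)) := by
        rw [← sub_eq_add_neg] at hconv
        gcongr
    _ = oddRpow q y - oddRpow q x := by
        rw [← mul_assoc, hcancel, one_mul, oddRpow_of_nonneg hq₀ hy, oddRpow_of_nonpos hq₀ hx,
          sub_neg_eq_add]

theorem two_rpow_one_sub_mul_rpow_sub_le_oddRpow_sub (hq : 1 ≤ q) {x y : ℝ} (hxy : x ≤ y) :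
    2 ^ (1 - q) * (y - x) ^ q ≤ oddRpow q y - oddRpow q x := by
  have hweaken : 2 ^ (1 - q) * (y - x) ^ q ≤ (y - x) ^ q :=
    mul_le_of_le_one_left (rpow_nonneg (sub_nonneg.2 hxy) q)
      (rpow_le_one_of_one_le_of_nonpos one_le_two (by linarith))
  rcases le_total 0 x with hx | hx
  · exact hweaken.trans (rpow_sub_le_oddRpow_sub_of_nonneg hq hx hxy)
  rcases le_total y 0 with hy | hy
  · exact hweaken.trans (rpow_sub_le_oddRpow_sub_of_nonpos hq hy hxy)
  · exact two_rpow_one_sub_mul_rpow_sub_le_oddRpow_sub_of_nonpos_of_nonneg hq hx hy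

/-- For `p ≥ 2`, `a ∈ ℝ`, `b ≥ 0`, one has
`(a+b)^{p-1} - a^{p-1} ≥ 2^{2-p} b^{p-1}`, where `t^{p-1} := |t|^{p-2} t`. -/
theorem odd_power_lower_bound (p a b : ℝ) (hp : 2 ≤ p) (hb : 0 ≤ b) :
    |a + b| ^ (p - 2) * (a + b) - |a| ^ (p - 2) * a ≥ (2 : ℝ) ^ (2 - p) * b ^ (p - 1) := by
  have key := two_rpow_one_sub_mul_rpow_sub_le_oddRpow_sub (q := p - 1) (by linarith)
    (le_add_of_nonneg_right hb : a ≤ a + b)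
  rwa [add_sub_cancel_left, oddRpow, oddRpow, show p - 1 - 1 = p - 2 by ring,
    show 1 - (p - 1) = 2 - p by ring] at key
end

section
/- For every p ≥ 2 there exists a constant C_p > 0 such that for all real numbers a, b, c one has (a-b)^{p-1} - (c-b)^{p-1} ≤ C_p (|a|^{p-2} + |b|^{p-2}) |a-c| + C_p |a-c|^{p-1}, where t^{p-1} := |t|^{p-2} t denotes the odd power. -/
/-!
The odd power `t ↦ |t| ^ r * t` (`r = p - 2 ≥ 0`) has derivative `(r + 1) |t| ^ r`, so by the mean
value theorem it is `(r + 1) M ^ r`-Lipschitz on `[-M, M]`. Apply this to `a - b` and `c - b`,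
whose difference is `a - c`, with `M = max |a - b| |c - b| ≤ |a| + |b| + |a - c|`, and split
`M ^ r ≤ 3 ^ r (|a| ^ r + |b| ^ r + |a - c| ^ r)`; the last term times `|a - c|` is `|a - c| ^ (p - 1)`.
-/

open Filter Set Topology

theorem hasDerivAt_abs_rpow_mul_self {r : ℝ} (hr : 0 ≤ r) (t : ℝ) :
    HasDerivAt (fun s : ℝ => |s| ^ r * s) ((r + 1) * |t| ^ r) t := by
  rcases eq_or_ne t 0 with rfl | ht
  · have hslope : Tendsto (fun s : ℝ => |s| ^ r) (𝓝[≠] 0) (𝓝 (|0| ^ r)) :=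
      ((Real.continuous_rpow_const hr).comp continuous_abs).continuousAt.tendsto.mono_left
        nhdsWithin_le_nhds
    have hval : (r + 1) * |(0 : ℝ)| ^ r = |0| ^ r := by
      rcases eq_or_lt_of_le hr with rfl | hr
      · simp
      · simp [Real.zero_rpow hr.ne']
    rw [hasDerivAt_iff_tendsto_slope_zero, hval]
    refine hslope.congr' ?_
    filter_upwards [self_mem_nhdsWithin] with s (hs : s ≠ 0)
    simp only [zero_add, mul_zero, sub_zero, smul_eq_mul]
    field_simp
  · have habs : HasDerivAt (fun s : ℝ => |s| ^ r) (r * |t| ^ (r - 1) * SignType.sign t) t :=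
      (Real.hasDerivAt_rpow_const (Or.inl (abs_ne_zero.2 ht))).comp t (hasDerivAt_abs ht)
    refine (habs.mul (hasDerivAt_id t)).congr_deriv ?_
    rw [Real.rpow_sub_one (abs_ne_zero.2 ht), id, mul_assoc _ _ t, sign_mul_self]
    field_simp

theorem abs_rpow_mul_self_sub_le {r : ℝ} (hr : 0 ≤ r) (x y : ℝ) :
    |(|x| ^ r * x) - (|y| ^ r * y)| ≤ (r + 1) * max |x| |y| ^ r * |x - y| := by
  set M := max |x| |y|
  have hderiv : ∀ t ∈ Icc (-M) M,
      HasDerivWithinAt (fun s : ℝ => |s| ^ r * s) ((r + 1) * |t| ^ r) (Icc (-M) M) t :=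
    fun t _ => (hasDerivAt_abs_rpow_mul_self hr t).hasDerivWithinAt
  have hbound : ∀ t ∈ Icc (-M) M, ‖(r + 1) * |t| ^ r‖ ≤ (r + 1) * M ^ r := by
    intro t ht
    rw [Real.norm_of_nonneg (by positivity)]
    gcongr
    exact abs_le.2 ht
  exact (convex_Icc (-M) M).norm_image_sub_le_of_norm_hasDerivWithin_le hderiv hbound
    (abs_le.1 (le_max_right |x| |y|)) (abs_le.1 (le_max_left |x| |y|))

theorem add_add_rpow_le {r u v w : ℝ} (hr : 0 ≤ r) (hu : 0 ≤ u) (hv : 0 ≤ v) (hw : 0 ≤ w) :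
    (u + v + w) ^ r ≤ 3 ^ r * (u ^ r + v ^ r + w ^ r) := by
  have hmax : u + v + w ≤ 3 * max u (max v w) := by
    linarith [le_max_left u (max v w), le_max_left v w, le_max_right v w,
      le_max_right u (max v w)]
  calc (u + v + w) ^ r ≤ (3 * max u (max v w)) ^ r := by gcongr
    _ = 3 ^ r * max (u ^ r) (max (v ^ r) (w ^ r)) := by
      rw [Real.mul_rpow (by norm_num) (by positivity), Real.rpow_max hu (by positivity) hr,
        Real.rpow_max hv hw hr]
    _ ≤ 3 ^ r * (u ^ r + v ^ r + w ^ r) := by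
      gcongr
      have := Real.rpow_nonneg hu r
      have := Real.rpow_nonneg hv r
      have := Real.rpow_nonneg hw r
      exact max_le (by linarith) (max_le (by linarith) (by linarith))

/-- For every `p ≥ 2` there is `C_p > 0` such that for all reals `a b c`,
`(a-b)^{p-1} - (c-b)^{p-1} ≤ C_p (|a|^{p-2}+|b|^{p-2})|a-c| + C_p |a-c|^{p-1}`,
where `t^{p-1} := |t|^{p-2} t`. -/
theorem odd_power_difference_bound (p : ℝ) (hp : 2 ≤ p) :
    ∃ C : ℝ, 0 < C ∧ ∀ a b c : ℝ,
      |a - b| ^ (p - 2) * (a - b) - |c - b| ^ (p - 2) * (c - b) ≤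
        C * (|a| ^ (p - 2) + |b| ^ (p - 2)) * |a - c| + C * |a - c| ^ (p - 1) := by
  have hr : 0 ≤ p - 2 := by linarith
  refine ⟨(p - 1) * 3 ^ (p - 2), mul_pos (by linarith) (by positivity), fun a b c => ?_⟩
  have hM : max |a - b| |c - b| ≤ |a| + |b| + |a - c| :=
    max_le (by linarith [abs_sub a b, abs_nonneg (a - c)])
      (by linarith [abs_sub a b, abs_sub_le c a b, abs_sub_comm c a])
  have hLip := abs_rpow_mul_self_sub_le hr (a - b) (c - b)
  rw [sub_sub_sub_cancel_right, show p - 2 + 1 = p - 1 by ring] at hLip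
  calc |a - b| ^ (p - 2) * (a - b) - |c - b| ^ (p - 2) * (c - b)
      ≤ (p - 1) * max |a - b| |c - b| ^ (p - 2) * |a - c| := (le_abs_self _).trans hLip
    _ ≤ (p - 1) * (3 ^ (p - 2) * (|a| ^ (p - 2) + |b| ^ (p - 2) + |a - c| ^ (p - 2))) *
          |a - c| := by
      gcongr
      · linarith
      · exact (Real.rpow_le_rpow (by positivity) hM hr).trans
          (add_add_rpow_le hr (abs_nonneg a) (abs_nonneg b) (abs_nonneg _))
    _ = (p - 1) * 3 ^ (p - 2) * (|a| ^ (p - 2) + |b| ^ (p - 2)) * |a - c| +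
          (p - 1) * 3 ^ (p - 2) * |a - c| ^ (p - 1) := by
      rw [show p - 1 = p - 2 + 1 by ring, Real.rpow_add_one' (abs_nonneg _) (by linarith)]
      ring
end
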